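/- arXiv:0706.2049 — 6 statements merged into one kernel-verified Lean document; each statement's English description precedes it below -/
import Mathlib

section
/- For every nonnegative integer k, the coefficient of z^k in C(-z)^N equals (-1)^k * N/(k+N) * binom(2k+N-1, k), where C(z) is the Catalan generating function and N is a positive integer. -/
/-!
Since `C = 1 + X * C ^ 2`, we have `C ^ (N + 1) = C ^ N + X * C ^ (N + 2)`, so the coefficients
`c N k` of `C ^ N` satisfy `c (N + 1) (k + 1) = c N (k + 1) + c (N + 2) k`, with `c 0 (k + 1) = 0`
and `c N 0 = 1`. The closed form `N / (k + N) * binom(2k + N - 1, k)` obeys the same recurrence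
(Pascal's rule plus absorption) and boundary values. Finally `C(-z)` is `C(z)` rescaled by `-1`,
which multiplies the `k`-th coefficient of every power by `(-1) ^ k`.
-/

open PowerSeries

/-- At `N = k = 0` this is `0 / 0 = 0`, not the constant coefficient `1` of `C ^ 0`. -/
noncomputable def catalanConvolution (N k : ℕ) : ℚ :=
  N / (k + N) * (2 * k + N - 1).choose k

lemma catalanConvolution_zero_left (k : ℕ) : catalanConvolution 0 k = 0 := by
  simp [catalanConvolution]

lemma catalanConvolution_zero_right {N : ℕ} (hN : N ≠ 0) : catalanConvolution N 0 = 1 := by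
  simp [catalanConvolution, hN]

lemma catalanConvolution_succ_succ (N k : ℕ) :
    catalanConvolution (N + 1) (k + 1) =
      catalanConvolution N (k + 1) + catalanConvolution (N + 2) k := by
  set n := 2 * k + N + 1
  have pascal : ((2 * k + N + 2).choose (k + 1) : ℚ) = n.choose k + n.choose (k + 1) := by
    exact_mod_cast Nat.choose_succ_succ' n k
  have absorb : (n.choose (k + 1) : ℚ) * (k + 1) = n.choose k * (k + N + 1) := by
    have h := Nat.choose_succ_right_eq n k
    rw [show n - k = k + N + 1 by omega] at h
    exact_mod_cast h
  simp only [catalanConvolution, show 2 * (k + 1) + (N + 1) - 1 = 2 * k + N + 2 by omega,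
    show 2 * (k + 1) + N - 1 = n by omega, show 2 * k + (N + 2) - 1 = n by omega, pascal]
  push_cast
  field_simp
  linear_combination ((k : ℚ) + N + 2) * absorb

lemma catalanSeries_pow_succ (N : ℕ) :
    catalanSeries ^ (N + 1) = catalanSeries ^ N + X * catalanSeries ^ (N + 2) := by
  calc catalanSeries ^ (N + 1) = catalanSeries ^ N * (catalanSeries ^ 2 * X + 1) := by
        rw [catalanSeries_sq_mul_X_add_one, pow_succ]
    _ = catalanSeries ^ N + X * catalanSeries ^ (N + 2) := by ring

lemma coeff_catalanSeries_pow {N k : ℕ} (h : N + k ≠ 0) :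
    ((coeff k (catalanSeries ^ N) : ℕ) : ℚ) = catalanConvolution N k := by
  induction k generalizing N with
  | zero =>
    rw [coeff_zero_eq_constantCoeff, map_pow, catalanSeries_constantCoeff,
      catalanConvolution_zero_right (by simpa using h)]
    simp
  | succ k ih =>
    induction N with
    | zero => simp [coeff_one, catalanConvolution_zero_left]
    | succ N ihN =>
      rw [catalanSeries_pow_succ, map_add, coeff_succ_X_mul, Nat.cast_add,
        ihN (by omega), ih (by omega), catalanConvolution_succ_succ]

/-- For every nonnegative integer `k` and positive integer `N`, the coefficient of
`z^k` in `C(-z)^N` equals `(-1)^k * N/(k+N) * binom(2k+N-1, k)`, where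
`C(z) = ∑ catalan n * z^n` is the Catalan generating function, so that
`C(-z) = ∑ (-1)^n * catalan n * z^n`. -/
theorem coeff_catalan_neg_pow (N : ℕ) (hN : 1 ≤ N) (k : ℕ) :
    PowerSeries.coeff k ((PowerSeries.mk fun n => ((-1)^n * catalan n : ℚ))^N)
      = (-1)^k * (N : ℚ)/(k + N) * (Nat.choose (2*k + N - 1) k : ℚ) := by
  have hsubst : (PowerSeries.mk fun n => ((-1)^n * catalan n : ℚ)) =
      rescale (-1) (map (Nat.castRingHom ℚ) catalanSeries) := by
    ext n
    simp [coeff_rescale]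
  rw [hsubst, ← map_pow, ← map_pow, coeff_rescale, coeff_map, Nat.coe_castRingHom,
    coeff_catalanSeries_pow (by omega), catalanConvolution, mul_div_assoc, mul_assoc]
end

section
/- The formal power series identity exp(sum_{n>0} ((-1)^{n-1}/n) * [binom(2n-1,n-1)*m + (4^{n-1} - binom(2n-1,n-1))*(2g-2)] * z^n) = (2/((1+4z)^{1/2}+1))^{2g-2-m} * (1+4z)^{(g-1)/2} holds in Q[[z]], for fixed integers g and m. -/
/-!
Both sides have constant term `1` and satisfy the same linear differential equation `y' = a y`,
whose solutions are determined by their constant term. Put `s = (1+4z)^{1/2}`, `W = (1+4z)⁻¹` and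
`V = ∑ (-1)ⁿ C(2n+1,n) zⁿ` (`altChooseSeries`), which equals `2 / (s (s+1))`. The exponent on the
left has derivative `a = m V + (2g-2)(W - V)`. On the right, `(1+4z)^x` has logarithmic derivative
`4x W` (from the recursion of its coefficients) and `2/(s+1)` has logarithmic derivative `-V`, so
the product has logarithmic derivative `-(2g-2-m) V + (2g-2) W = a`.
-/

open PowerSeries

/-- The generalized binomial coefficient `binom(x, k) = x(x-1)⋯(x-k+1)/k!`. -/
noncomputable def genChoose (x : ℚ) (k : ℕ) : ℚ :=
  (∏ j ∈ Finset.range k, (x - j)) / (Nat.factorial k : ℚ)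

/-- The formal binomial series `(1+4z)^x = ∑_k binom(x,k) (4z)^k`. -/
noncomputable def onePlusFourZPow (x : ℚ) : PowerSeries ℚ :=
  PowerSeries.mk fun k => genChoose x k * 4 ^ k

/-- Integer powers (possibly negative) of a formal power series with invertible
constant term, via the formal inverse. -/
noncomputable def zpowPS (f : PowerSeries ℚ) (n : ℤ) : PowerSeries ℚ :=
  if 0 ≤ n then f ^ n.toNat else f⁻¹ ^ (-n).toNat

/-- The formal exponential `exp F = ∑_k F^k/k!` of a power series `F` with zero
constant term (the coefficient of `z^n` only involves `F^k` for `k ≤ n`). -/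
noncomputable def expPS (F : PowerSeries ℚ) : PowerSeries ℚ :=
  PowerSeries.mk fun n => ∑ k ∈ Finset.range (n+1),
    PowerSeries.coeff (R := ℚ) n (F ^ k) / (Nat.factorial k : ℚ)

section LinearODE

variable {R : Type*} [CommRing R]

theorem derivative_mul_of_eq_mul {a b f g : R⟦X⟧} (hf : d⁄dX R f = a * f)
    (hg : d⁄dX R g = b * g) : d⁄dX R (f * g) = (a + b) * (f * g) := by
  rw [(d⁄dX R).leibniz, hf, hg, smul_eq_mul, smul_eq_mul]
  ring

theorem derivative_pow_of_eq_mul {a f : R⟦X⟧} (hf : d⁄dX R f = a * f) (n : ℕ) :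
    d⁄dX R (f ^ n) = (n * a) * f ^ n := by
  induction n with
  | zero => simp
  | succ n ih =>
    rw [pow_succ, derivative_mul_of_eq_mul ih hf]
    push_cast
    ring

variable {K : Type*} [Field K]

theorem derivative_inv_of_eq_mul {a f : K⟦X⟧} (hf : d⁄dX K f = a * f)
    (hf0 : constantCoeff f ≠ 0) : d⁄dX K f⁻¹ = -a * f⁻¹ := by
  rw [derivative_inv', hf]
  linear_combination (-a * f⁻¹) * PowerSeries.inv_mul_cancel f hf0

/-- `f / g` has derivative zero, hence is the constant `1`. -/
theorem eq_of_derivative_eq_mul [CharZero K] {a f g : K⟦X⟧} (hf : d⁄dX K f = a * f)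
    (hg : d⁄dX K g = a * g) (hg0 : constantCoeff g ≠ 0)
    (h0 : constantCoeff f = constantCoeff g) : f = g := by
  have hquot : f * g⁻¹ = 1 := by
    apply derivative.ext
    · rw [derivative_mul_of_eq_mul hf (derivative_inv_of_eq_mul hg hg0)]
      simp
    · simp [PowerSeries.constantCoeff_inv, h0, hg0]
  exact ((PowerSeries.eq_mul_inv_iff_mul_eq hg0 (φ₁ := 1)).mp hquot.symm).symm.trans (one_mul g)

end LinearODE

theorem expPS_eq_subst_exp {F : ℚ⟦X⟧} (hF : constantCoeff F = 0) :
    expPS F = (exp ℚ).subst F := by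
  ext n
  rw [coeff_subst' (HasSubst.of_constantCoeff_zero' hF),
    finsum_eq_sum_of_support_subset (s := Finset.range (n + 1))]
  · simp [expPS, coeff_exp, div_eq_inv_mul]
  · intro k hk
    contrapose! hk
    have hnk : (n : ℕ∞) < (F ^ k).order :=
      (Nat.cast_lt.mpr (by simpa using hk)).trans_le (le_order_pow_of_constantCoeff_eq_zero k hF)
    simp [coeff_of_lt_order n hnk]

theorem derivative_expPS {F : ℚ⟦X⟧} (hF : constantCoeff F = 0) :
    d⁄dX ℚ (expPS F) = d⁄dX ℚ F * expPS F := by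
  rw [expPS_eq_subst_exp hF, derivative_subst (HasSubst.of_constantCoeff_zero' hF), derivative_exp,
    mul_comm]

theorem constantCoeff_expPS (F : ℚ⟦X⟧) : constantCoeff (expPS F) = 1 := by
  rw [← coeff_zero_eq_constantCoeff_apply]
  simp [expPS]

theorem constantCoeff_zpowPS (f : ℚ⟦X⟧) (k : ℤ) :
    constantCoeff (zpowPS f k) = constantCoeff f ^ k := by
  unfold zpowPS
  split_ifs with hk
  · rw [map_pow, ← zpow_natCast, Int.toNat_of_nonneg hk]
  · rw [map_pow, PowerSeries.constantCoeff_inv, ← zpow_natCast, Int.toNat_of_nonneg (by omega),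
      inv_zpow', neg_neg]

theorem derivative_zpowPS {a f : ℚ⟦X⟧} (hf : d⁄dX ℚ f = a * f) (hf0 : constantCoeff f ≠ 0)
    (k : ℤ) : d⁄dX ℚ (zpowPS f k) = (k * a) * zpowPS f k := by
  unfold zpowPS
  split_ifs with hk
  · rw [derivative_pow_of_eq_mul hf, ← Int.cast_natCast, Int.toNat_of_nonneg hk]
  · rw [derivative_pow_of_eq_mul (derivative_inv_of_eq_mul hf hf0), ← Int.cast_natCast,
      Int.toNat_of_nonneg (by omega)]
    push_cast
    ring

theorem genChoose_succ (x : ℚ) (k : ℕ) :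
    (k + 1) * genChoose x (k + 1) = (x - k) * genChoose x k := by
  have hk : (k.factorial : ℚ) ≠ 0 := by positivity
  simp only [genChoose, Finset.prod_range_succ, Nat.factorial_succ]
  push_cast
  field_simp

theorem constantCoeff_onePlusFourZPow (x : ℚ) : constantCoeff (onePlusFourZPow x) = 1 := by
  simp [onePlusFourZPow, genChoose, ← coeff_zero_eq_constantCoeff_apply]

theorem one_add_four_X_mul_derivative_onePlusFourZPow (x : ℚ) :
    (1 + 4 * X) * d⁄dX ℚ (onePlusFourZPow x) = C (4 * x) * onePlusFourZPow x := by
  have hsplit (f : ℚ⟦X⟧) : (1 + 4 * X) * f = f + C 4 * (X * f) := by rw [map_ofNat]; ring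
  ext n
  rw [hsplit, map_add, coeff_C_mul, coeff_C_mul]
  rcases n with _ | n
  · simp [onePlusFourZPow, coeff_derivative, genChoose, mul_comm]
  · have hrec := genChoose_succ x (n + 1)
    simp only [onePlusFourZPow, coeff_derivative, coeff_succ_X_mul, coeff_mk]
    push_cast at hrec ⊢
    linear_combination 4 ^ (n + 2) * hrec

theorem derivative_onePlusFourZPow (x : ℚ) :
    d⁄dX ℚ (onePlusFourZPow x) = (C (4 * x) * (1 + 4 * X)⁻¹) * onePlusFourZPow x := by
  have h : constantCoeff (1 + 4 * X : ℚ⟦X⟧) ≠ 0 := by simp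
  calc d⁄dX ℚ (onePlusFourZPow x)
      = (1 + 4 * X)⁻¹ * ((1 + 4 * X) * d⁄dX ℚ (onePlusFourZPow x)) := by
        rw [← mul_assoc, PowerSeries.inv_mul_cancel _ h, one_mul]
    _ = _ := by rw [one_add_four_X_mul_derivative_onePlusFourZPow]; ring

theorem onePlusFourZPow_add (x y : ℚ) :
    onePlusFourZPow (x + y) = onePlusFourZPow x * onePlusFourZPow y := by
  refine eq_of_derivative_eq_mul (derivative_onePlusFourZPow _) ?_
    (by simp [constantCoeff_onePlusFourZPow]) (by simp [constantCoeff_onePlusFourZPow])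
  rw [derivative_mul_of_eq_mul (derivative_onePlusFourZPow x) (derivative_onePlusFourZPow y)]
  simp only [mul_add, map_add]
  ring

theorem onePlusFourZPow_zero : onePlusFourZPow 0 = 1 :=
  eq_of_derivative_eq_mul (derivative_onePlusFourZPow 0) (by simp) (by simp)
    (by simp [constantCoeff_onePlusFourZPow])

theorem onePlusFourZPow_one : onePlusFourZPow 1 = 1 + 4 * X := by
  refine eq_of_derivative_eq_mul (derivative_onePlusFourZPow 1) ?_ (by simp)
    (by simp [constantCoeff_onePlusFourZPow])
  rw [mul_assoc, PowerSeries.inv_mul_cancel _ (by simp)]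
  simp [← map_ofNat C 4]

theorem coeff_onePlusFourZPow_neg_half (n : ℕ) :
    coeff n (onePlusFourZPow (-1 / 2)) = (-1) ^ n * (2 * n).choose n := by
  simp only [onePlusFourZPow, coeff_mk]
  induction n with
  | zero => simp [genChoose]
  | succ n ih =>
    have hrec := genChoose_succ (-1 / 2) n
    have hcentral : ((n : ℚ) + 1) * (2 * (n + 1)).choose (n + 1)
        = 2 * (2 * n + 1) * (2 * n).choose n := by
      exact_mod_cast Nat.succ_mul_centralBinom_succ n
    apply mul_left_cancel₀ (show (n : ℚ) + 1 ≠ 0 by positivity)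
    linear_combination 4 ^ (n + 1) * hrec - (2 + 4 * n) * ih - (-1) ^ (n + 1) * hcentral

theorem onePlusFourZPow_half_mul_self :
    onePlusFourZPow (1 / 2) * onePlusFourZPow (1 / 2) = 1 + 4 * X := by
  rw [← onePlusFourZPow_add]; norm_num [onePlusFourZPow_one]

theorem onePlusFourZPow_half_mul_neg_half :
    onePlusFourZPow (1 / 2) * onePlusFourZPow (-1 / 2) = 1 := by
  rw [← onePlusFourZPow_add]; norm_num [onePlusFourZPow_zero]

theorem inv_one_add_four_X : (1 + 4 * X : ℚ⟦X⟧)⁻¹ = mk fun n => (-4) ^ n := by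
  rw [PowerSeries.inv_eq_iff_mul_eq_one (by simp)]
  have hgeom : (mk fun n => (-4 : ℚ) ^ n) = rescale (-4) (mk 1) := by
    rw [rescale_mk]; simp
  have hlin : (1 + 4 * X : ℚ⟦X⟧) = rescale (-4) (1 - X) := by
    rw [map_sub, map_one, rescale_X, map_neg, map_ofNat]; ring
  rw [hgeom, hlin, ← map_mul, mk_one_mul_one_sub_eq_one, map_one]

noncomputable def altChooseSeries : ℚ⟦X⟧ := mk fun n => (-1) ^ n * ((2 * n + 1).choose n : ℚ)

theorem two_mul_X_mul_altChooseSeries :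
    2 * X * altChooseSeries = 1 - onePlusFourZPow (-1 / 2) := by
  ext n
  rw [mul_assoc, ← map_ofNat C 2, coeff_C_mul, map_sub, coeff_one, coeff_onePlusFourZPow_neg_half]
  rcases n with _ | n
  · simp
  · have hpascal : (2 * (n + 1)).choose (n + 1) = 2 * (2 * n + 1).choose n := by
      rw [show 2 * (n + 1) = 2 * n + 1 + 1 by ring, Nat.choose_succ_succ, Nat.choose_symm_half]
      ring
    rw [coeff_succ_X_mul, altChooseSeries, coeff_mk, if_neg n.succ_ne_zero, hpascal]
    push_cast
    ring

/-- Multiplied by `2X`, this becomes `s² - 1 = 4X` for `s = (1+4X)^{1/2}`. -/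
theorem altChooseSeries_eq :
    altChooseSeries = 2 * (onePlusFourZPow (1 / 2) * (onePlusFourZPow (1 / 2) + 1))⁻¹ := by
  rw [PowerSeries.eq_mul_inv_iff_mul_eq (by simp [constantCoeff_onePlusFourZPow])]
  apply mul_left_cancel₀ (show (2 * X : ℚ⟦X⟧) ≠ 0 by simp [← map_ofNat C 2, X_ne_zero])
  linear_combination
    (onePlusFourZPow (1 / 2) * (onePlusFourZPow (1 / 2) + 1)) * two_mul_X_mul_altChooseSeries
      - (onePlusFourZPow (1 / 2) + 1) * onePlusFourZPow_half_mul_neg_half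
      + onePlusFourZPow_half_mul_self

theorem derivative_two_mul_inv_onePlusFourZPow_half_add_one :
    d⁄dX ℚ (2 * (onePlusFourZPow (1 / 2) + 1)⁻¹)
      = -altChooseSeries * (2 * (onePlusFourZPow (1 / 2) + 1)⁻¹) := by
  have hds := derivative_onePlusFourZPow (1 / 2)
  rw [← onePlusFourZPow_half_mul_self, show (4 : ℚ) * (1 / 2) = 2 by norm_num, map_ofNat] at hds
  rw [altChooseSeries_eq]
  set s := onePlusFourZPow (1 / 2)
  have hs : s⁻¹ * s = 1 :=
    PowerSeries.inv_mul_cancel _ (by simp [s, constantCoeff_onePlusFourZPow])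
  rw [← map_ofNat C 2, Derivation.leibniz, derivative_C, smul_zero, add_zero, smul_eq_mul,
    derivative_inv', map_add, derivative_one, add_zero, hds, PowerSeries.mul_inv_rev,
    PowerSeries.mul_inv_rev, map_ofNat]
  linear_combination (-4 * (s + 1)⁻¹ ^ 2 * s⁻¹) * hs

noncomputable def exponentSeries (a b : ℚ) : ℚ⟦X⟧ :=
  mk fun n : ℕ => if n = 0 then 0 else
    ((-1) ^ (n - 1) / (n : ℚ)) *
      ((Nat.choose (2 * n - 1) (n - 1) : ℚ) * a
        + ((4 : ℚ) ^ (n - 1) - (Nat.choose (2 * n - 1) (n - 1) : ℚ)) * b)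

theorem constantCoeff_exponentSeries (a b : ℚ) : constantCoeff (exponentSeries a b) = 0 := by
  simp [exponentSeries]

theorem derivative_exponentSeries (a b : ℚ) :
    d⁄dX ℚ (exponentSeries a b)
      = C a * altChooseSeries + C b * ((mk fun n => (-4) ^ n) - altChooseSeries) := by
  ext n
  rw [exponentSeries, altChooseSeries, coeff_derivative, coeff_mk, if_neg n.succ_ne_zero, map_add,
    coeff_C_mul, coeff_C_mul, map_sub, coeff_mk, coeff_mk,
    show 2 * (n + 1) - 1 = 2 * n + 1 by omega, Nat.add_sub_cancel, neg_pow (4 : ℚ)]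
  push_cast
  field_simp

/-- The formal power series identity
`exp(∑_{n>0} ((-1)^{n-1}/n)[binom(2n-1,n-1)m + (4^{n-1} - binom(2n-1,n-1))(2g-2)] z^n)`
`= (2/((1+4z)^{1/2}+1))^{2g-2-m} * (1+4z)^{(g-1)/2}` in `ℚ[[z]]`. -/
theorem exp_log_Nd_generating_function (g m : ℤ) :
    expPS (PowerSeries.mk fun n : ℕ => if n = 0 then 0 else
        ((-1)^(n-1) / (n : ℚ)) *
          ((Nat.choose (2*n - 1) (n - 1) : ℚ) * m
            + ((4:ℚ)^(n-1) - (Nat.choose (2*n - 1) (n - 1) : ℚ)) * (2*(g:ℚ) - 2)))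
      = zpowPS (2 * ((onePlusFourZPow (1/2) + 1)⁻¹)) (2*g - 2 - m)
          * onePlusFourZPow (((g : ℚ) - 1)/2) := by
  change expPS (exponentSeries m (2 * g - 2)) = _
  have hQ0 : constantCoeff (2 * (onePlusFourZPow (1 / 2) + 1)⁻¹) = 1 := by
    rw [map_mul, map_ofNat, PowerSeries.constantCoeff_inv, map_add, constantCoeff_onePlusFourZPow,
      map_one]
    norm_num
  refine eq_of_derivative_eq_mul ?_ (derivative_mul_of_eq_mul
      (derivative_zpowPS derivative_two_mul_inv_onePlusFourZPow_half_add_one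
        (by rw [hQ0]; exact one_ne_zero) _)
      (derivative_onePlusFourZPow _)) ?_ ?_
  · rw [derivative_expPS (constantCoeff_exponentSeries _ _), derivative_exponentSeries,
      ← inv_one_add_four_X, show (4 : ℚ) * (((g : ℚ) - 1) / 2) = 2 * g - 2 by ring]
    simp only [map_sub, map_mul, map_intCast, map_ofNat]
    push_cast
    ring
  all_goals
    rw [map_mul, constantCoeff_zpowPS, hQ0, one_zpow, constantCoeff_onePlusFourZPow, one_mul]
  · exact one_ne_zero
  · exact constantCoeff_expPS _
end

section
/- For n >= 1 and a_1 = ... = a_n = a, the determinant Delta(a,...,a) of the n x n matrix with (i,j)-entry 1/(a+j-i)! equals (n-1)! (n-2)! ... 1! * 0! / ((a+n-1)! (a+n-2)! ... a!); more generally, Delta(a_1,...,a_n) = prod_{j>i} (a_i - a_j - i + j) / prod_{i=1}^n (a_i - i + n - 1)!. -/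
/-!
Put `mᵢ = aᵢ - i + n - 1`. Since `1/(mᵢ - k)! = mᵢ(mᵢ - 1)⋯(mᵢ - k + 1)/mᵢ!` (both sides
vanish when `k > mᵢ`), pulling `1/mᵢ!` out of row `i` leaves the matrix of falling factorials
`mᵢ^{(n-1-j)}`. After reversing rows and columns this is the monic polynomial basis
`x^{(j)}` evaluated at the points `mᵢ`, so its determinant is the Vandermonde determinant
`∏_{i<j} (mᵢ - mⱼ)`. For constant `a` the Vandermonde determinant at `0, …, n-1` is the
superfactorial `0!·1!⋯(n-1)!`.
-/

open Finset Matrix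
open scoped Nat

section PairProducts

variable {M : Type*} [CommMonoid M] {n : ℕ}

lemma prod_filter_lt_eq_prod_prod_Ioi (f : Fin n → Fin n → M) :
    ∏ p ∈ univ.filter (fun p : Fin n × Fin n => p.1 < p.2), f p.1 p.2
      = ∏ i, ∏ j ∈ Ioi i, f i j := by
  rw [prod_sigma']
  refine prod_nbij' (fun p => ⟨p.1, p.2⟩) (fun x => (x.1, x.2)) ?_ ?_ ?_ ?_ ?_ <;> simp

lemma prod_filter_lt_rev (f : Fin n → Fin n → M) :
    ∏ p ∈ univ.filter (fun p : Fin n × Fin n => p.1 < p.2), f p.2.rev p.1.rev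
      = ∏ p ∈ univ.filter (fun p : Fin n × Fin n => p.1 < p.2), f p.1 p.2 := by
  refine prod_nbij' (fun p => (p.2.rev, p.1.rev)) (fun p => (p.2.rev, p.1.rev))
    ?_ ?_ ?_ ?_ ?_ <;> simp [Fin.rev_lt_rev]

end PairProducts

section Vandermonde

variable {R : Type*} [CommRing R] {n : ℕ}

lemma det_vandermonde_eq_prod_filter_lt (v : Fin n → R) :
    det (vandermonde v)
      = ∏ p ∈ univ.filter (fun p : Fin n × Fin n => p.1 < p.2), (v p.2 - v p.1) := by
  rw [det_vandermonde, prod_filter_lt_eq_prod_prod_Ioi (fun i j => v j - v i)]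

lemma det_vandermonde_id_eq_prod_range_factorial (n : ℕ) :
    det (vandermonde fun i : Fin n => (i : R)) = ∏ i ∈ range n, (i ! : R) := by
  cases n with
  | zero => simp
  | succ k =>
    rw [det_vandermonde_id_eq_superFactorial, ← Nat.prod_range_succ_factorial, Nat.cast_prod]

lemma det_descFactorial_eq_det_vandermonde [IsDomain R] (v : Fin n → ℕ) :
    det (of fun i j : Fin n => ((v i).descFactorial j : R))
      = det (vandermonde fun i => (v i : R)) := by
  rw [det_eval_matrixOfPolynomials_eq_det_vandermonde _ (fun j => descPochhammer R j)
    (fun j => descPochhammer_natDegree R j) (fun j => monic_descPochhammer R j)]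
  simp only [descPochhammer_eval_eq_descFactorial]

lemma det_descFactorial_rev_eq_prod [IsDomain R] (v : Fin n → ℕ) :
    det (of fun i j : Fin n => ((v i).descFactorial (n - 1 - j) : R))
      = ∏ p ∈ univ.filter (fun p : Fin n × Fin n => p.1 < p.2), ((v p.1 : R) - v p.2) := by
  have hrev : (of fun i j : Fin n => ((v i).descFactorial (n - 1 - j) : R))
      = (of fun i j : Fin n => ((v i.rev).descFactorial j : R)).submatrix
          Fin.revPerm Fin.revPerm := by
    ext i j
    simp only [submatrix_apply, of_apply, Fin.revPerm_apply, Fin.rev_rev, Fin.val_rev]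
    congr 2
    omega
  rw [hrev, det_submatrix_equiv_self, det_descFactorial_eq_det_vandermonde,
    det_vandermonde_eq_prod_filter_lt, prod_filter_lt_rev (fun i j => (v i : R) - v j)]

end Vandermonde

section InverseFactorials

variable {K : Type*} [Field K] [CharZero K]

lemma inv_factorial_sub_eq_descFactorial_div (m k : ℕ) :
    (if 0 ≤ (m : ℤ) - k then (1 : K) / (((m : ℤ) - k).toNat ! : K) else 0)
      = m.descFactorial k / m ! := by
  split_ifs with h
  · have hk : k ≤ m := by omega
    rw [show ((m : ℤ) - k).toNat = m - k by omega,
      div_eq_div_iff (Nat.cast_ne_zero.2 (Nat.factorial_ne_zero _))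
        (Nat.cast_ne_zero.2 m.factorial_ne_zero), one_mul, mul_comm]
    exact_mod_cast (Nat.factorial_mul_descFactorial hk).symm
  · rw [Nat.descFactorial_eq_zero_iff_lt.mpr (by omega), Nat.cast_zero, zero_div]

theorem det_inv_factorial_eq {n : ℕ} (a : Fin n → ℤ)
    (ha : ∀ i : Fin n, 0 ≤ a i - (i : ℤ) + n - 1) :
    det (of fun i j : Fin n =>
        if 0 ≤ a i + (j : ℤ) - (i : ℤ) then
          (1 : K) / (Nat.factorial (a i + (j : ℤ) - (i : ℤ)).toNat : K)
        else 0)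
      = (∏ p ∈ univ.filter (fun p : Fin n × Fin n => p.1 < p.2),
            ((a p.1 - a p.2 - (p.1 : ℤ) + (p.2 : ℤ) : ℤ) : K))
          / ∏ i : Fin n, (Nat.factorial (a i - (i : ℤ) + n - 1).toNat : K) := by
  set m : Fin n → ℕ := fun i => (a i - (i : ℤ) + n - 1).toNat
  have hm : ∀ i, (m i : ℤ) = a i - (i : ℤ) + n - 1 := fun i => Int.toNat_of_nonneg (ha i)
  have hentry : ∀ i j : Fin n, a i + (j : ℤ) - (i : ℤ) = (m i : ℤ) - (n - 1 - j : ℕ) := by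
    intro i j
    have := j.isLt
    rw [hm]
    omega
  have hpair : ∀ p : Fin n × Fin n,
      ((a p.1 - a p.2 - (p.1 : ℤ) + (p.2 : ℤ) : ℤ) : K) = (m p.1 : K) - m p.2 := by
    intro p
    rw [show a p.1 - a p.2 - (p.1 : ℤ) + (p.2 : ℤ) = (m p.1 : ℤ) - m p.2 by rw [hm, hm]; ring]
    push_cast
    rfl
  calc _ = det (of fun i j : Fin n =>
          ((m i)! : K)⁻¹ * ((m i).descFactorial (n - 1 - j) : K)) := by
        congr 1
        ext i j
        rw [of_apply, of_apply, hentry, inv_factorial_sub_eq_descFactorial_div, div_eq_inv_mul]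
    _ = (∏ i, ((m i)! : K)⁻¹)
          * det (of fun i j : Fin n => ((m i).descFactorial (n - 1 - j) : K)) :=
        det_mul_column _ _
    _ = _ := by
        rw [det_descFactorial_rev_eq_prod, prod_congr rfl fun p _ => hpair p, prod_inv_distrib,
          div_eq_inv_mul]

theorem det_inv_factorial_const_eq (n : ℕ) {a : ℤ} (ha : 0 ≤ a) :
    det (of fun i j : Fin n =>
        if 0 ≤ a + (j : ℤ) - (i : ℤ) then
          (1 : K) / (Nat.factorial (a + (j : ℤ) - (i : ℤ)).toNat : K)
        else 0)
      = (∏ i ∈ range n, (Nat.factorial i : K))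
          / ∏ i ∈ range n, (Nat.factorial (a + (i : ℤ)).toNat : K) := by
  rw [det_inv_factorial_eq (fun _ => a) fun i => by have := i.isLt; omega]
  congr 1
  · have hpair : ∀ p : Fin n × Fin n,
        ((a - a - (p.1 : ℤ) + (p.2 : ℤ) : ℤ) : K) = ((p.2 : ℕ) : K) - (p.1 : ℕ) := by
      intro p
      push_cast
      ring
    rw [prod_congr rfl fun p _ => hpair p,
      ← det_vandermonde_eq_prod_filter_lt fun i : Fin n => ((i : ℕ) : K),
      det_vandermonde_id_eq_prod_range_factorial]
  · rw [Fin.prod_univ_eq_prod_range (fun i => ((a - (i : ℤ) + n - 1).toNat ! : K)),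
      ← prod_range_reflect (fun i => ((a + (i : ℤ)).toNat ! : K))]
    refine prod_congr rfl fun i hi => ?_
    rw [mem_range] at hi
    congr 3
    omega

end InverseFactorials

theorem delta_determinant_formula_general (n : ℕ) :
    (∀ a : Fin n → ℤ, (∀ i : Fin n, 0 ≤ a i - (i : ℤ) + n - 1) →
      Matrix.det (Matrix.of fun i j : Fin n =>
          if 0 ≤ a i + (j : ℤ) - (i : ℤ) then
            (1 : ℚ) / (Nat.factorial (a i + (j : ℤ) - (i : ℤ)).toNat : ℚ)
          else 0)
        = (∏ p ∈ Finset.univ.filter (fun p : Fin n × Fin n => p.1 < p.2),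
              ((a p.1 - a p.2 - (p.1 : ℤ) + (p.2 : ℤ) : ℤ) : ℚ))
            / ∏ i : Fin n, (Nat.factorial (a i - (i : ℤ) + n - 1).toNat : ℚ))
    ∧ (∀ a : ℤ, 0 ≤ a →
      Matrix.det (Matrix.of fun i j : Fin n =>
          if 0 ≤ a + (j : ℤ) - (i : ℤ) then
            (1 : ℚ) / (Nat.factorial (a + (j : ℤ) - (i : ℤ)).toNat : ℚ)
          else 0)
        = (∏ i ∈ Finset.range n, (Nat.factorial i : ℚ))
            / ∏ i ∈ Finset.range n, (Nat.factorial (a + (i : ℤ)).toNat : ℚ)) :=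
  ⟨det_inv_factorial_eq, fun _ ha => det_inv_factorial_const_eq n ha⟩

/-- For integers `a₁, …, aₙ`, `Δ(a₁,…,aₙ)` is the determinant of the `n × n`
matrix with `(i,j)`-entry `1/(aᵢ+j-i)!` (with the convention `1/k! = 0` for `k < 0`):
`Δ(a₁,…,aₙ) = ∏_{j>i} (aᵢ - aⱼ - i + j) / ∏ᵢ (aᵢ - i + n - 1)!`.
In particular, for `a₁ = ⋯ = aₙ = a ≥ 0` this gives
`Δ(a,…,a) = (n-1)!⋯1!·0! / ((a+n-1)!⋯a!)`. -/
theorem delta_determinant_formula (n : ℕ) (hn : 1 ≤ n) :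
    (∀ a : Fin n → ℤ, (∀ i : Fin n, 0 ≤ a i - (i : ℤ) + n - 1) →
      Matrix.det (Matrix.of fun i j : Fin n =>
          if 0 ≤ a i + (j : ℤ) - (i : ℤ) then
            (1 : ℚ) / (Nat.factorial (a i + (j : ℤ) - (i : ℤ)).toNat : ℚ)
          else 0)
        = (∏ p ∈ Finset.univ.filter (fun p : Fin n × Fin n => p.1 < p.2),
              ((a p.1 - a p.2 - (p.1 : ℤ) + (p.2 : ℤ) : ℤ) : ℚ))
            / ∏ i : Fin n, (Nat.factorial (a i - (i : ℤ) + n - 1).toNat : ℚ))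
    ∧ (∀ a : ℤ, 0 ≤ a →
      Matrix.det (Matrix.of fun i j : Fin n =>
          if 0 ≤ a + (j : ℤ) - (i : ℤ) then
            (1 : ℚ) / (Nat.factorial (a + (j : ℤ) - (i : ℤ)).toNat : ℚ)
          else 0)
        = (∏ i ∈ Finset.range n, (Nat.factorial i : ℚ))
            / ∏ i ∈ Finset.range n, (Nat.factorial (a + (i : ℤ)).toNat : ℚ)) :=
  delta_determinant_formula_general n
end

section
/- With P_c(a,d) and P_{alpha,2}(a,d) as defined by the explicit alternating sums, for d = 1 and any a >= 1: P_c(a,1) = -(a+2), P_{alpha,2}(a,1) = -a/2, and consequently a*P_c(a,1) - (4*1+2a)*P_{alpha,2}(a,1) = 0. -/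
/-!
For `d = 1` the falling factorial `1!/(1-i)!` vanishes for `i ≥ 2`, so each sum has only the
terms `i = 0, 1`. After cancelling factorials both become rational functions of `a` sharing the
factor `3a - 1`:
`P_c(a,1) = -((2a+1)·2a - (a-1)(a-2)) / (3a-1) = -(3a-1)(a+2) / (3a-1)` and
`P_{α,2}(a,1) = -(2a(2a-1) - a(a-1)) / (2(3a-1)) = -a(3a-1) / (2(3a-1))`.
The `i = 1` term of `P_c` is only present for `a ≥ 3` and that of `P_{α,2}` for `a ≥ 2`; the
remaining small cases are evaluated directly.
-/

/-- `P_c(a,d)`: the coefficient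
`-((2ad+1)!/((2ad-d+a)! d!)) ∑_{i=0}^{⌊(a-1)/2⌋} (-1)^i ((2a-2)d+a)!/((2a-2)d+2i+1)!`
`· d!/(d-i)! · (a-1)!/(a-1-2i)! · 1/i!`, where `d!/(d-i)!` is the falling factorial
(zero when `i > d`). -/
noncomputable def Pc (a d : ℕ) : ℚ :=
  -((Nat.factorial (2*a*d + 1) : ℚ) / ((Nat.factorial (2*a*d - d + a) : ℚ) * (Nat.factorial d : ℚ)))
    * ∑ i ∈ Finset.range ((a-1)/2 + 1),
        (-1)^i * ((Nat.factorial ((2*a-2)*d + a) : ℚ) / (Nat.factorial ((2*a-2)*d + 2*i + 1) : ℚ))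
          * (Nat.descFactorial d i : ℚ)
          * ((Nat.factorial (a-1) : ℚ) / (Nat.factorial (a-1-2*i) : ℚ))
          * (1 / (Nat.factorial i : ℚ))

/-- `P_{α,2}(a,d)`: the coefficient
`-((2ad)!/(2(2ad-d+a)! d!)) ∑_{i=0}^{⌊a/2⌋} (-1)^i ((2a-2)d+a)!/((2a-2)d+2i)!`
`· d!/(d-i)! · a!/(a-2i)! · 1/i!`, where `d!/(d-i)!` is the falling factorial
(zero when `i > d`). -/
noncomputable def Palpha2 (a d : ℕ) : ℚ :=
  -((Nat.factorial (2*a*d) : ℚ) / (2 * (Nat.factorial (2*a*d - d + a) : ℚ) * (Nat.factorial d : ℚ)))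
    * ∑ i ∈ Finset.range (a/2 + 1),
        (-1)^i * ((Nat.factorial ((2*a-2)*d + a) : ℚ) / (Nat.factorial ((2*a-2)*d + 2*i) : ℚ))
          * (Nat.descFactorial d i : ℚ)
          * ((Nat.factorial a : ℚ) / (Nat.factorial (a-2*i) : ℚ))
          * (1 / (Nat.factorial i : ℚ))

open Finset

theorem Pc_add_three_one (n : ℕ) : Pc (n + 3) 1 = -((n : ℚ) + 5) := by
  rw [Pc, sum_eq_add_of_mem 0 1 (by simp) (by simp only [mem_range]; omega) zero_ne_one
    fun i _ hi => by simp [Nat.descFactorial_of_lt (by omega : 1 < i)]]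
  simp only [mul_one, mul_zero, add_zero, Nat.sub_zero]
  rw [show 2 * (n + 3) - 1 + (n + 3) = 3 * n + 8 by omega,
    show 2 * (n + 3) - 2 + (n + 3) = 3 * n + 7 by omega,
    show 2 * (n + 3) - 2 + 2 + 1 = 2 * n + 7 by omega,
    show 2 * (n + 3) - 2 + 1 = 2 * n + 5 by omega,
    show 2 * (n + 3) + 1 = 2 * n + 7 by omega,
    show n + 3 - 1 - 2 = n by omega, show n + 3 - 1 = n + 2 by omega]
  simp only [Nat.factorial_succ, Nat.descFactorial]
  push_cast
  field_simp
  ring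

theorem Palpha2_add_two_one (n : ℕ) : Palpha2 (n + 2) 1 = -((n : ℚ) + 2) / 2 := by
  rw [Palpha2, sum_eq_add_of_mem 0 1 (by simp) (by simp only [mem_range]; omega) zero_ne_one
    fun i _ hi => by simp [Nat.descFactorial_of_lt (by omega : 1 < i)]]
  simp only [mul_one, mul_zero, add_zero, Nat.sub_zero]
  rw [show 2 * (n + 2) - 1 + (n + 2) = 3 * n + 5 by omega,
    show 2 * (n + 2) - 2 + (n + 2) = 3 * n + 4 by omega,
    show 2 * (n + 2) - 2 + 2 = 2 * n + 4 by omega,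
    show 2 * (n + 2) - 2 = 2 * n + 2 by omega,
    show 2 * (n + 2) = 2 * n + 4 by omega, show n + 2 - 2 = n by omega]
  simp only [Nat.factorial_succ, Nat.descFactorial]
  push_cast
  field_simp
  ring

theorem Pc_one : ∀ {a : ℕ}, 1 ≤ a → Pc a 1 = -((a : ℚ) + 2)
  | 1, _ | 2, _ => by norm_num [Pc, Nat.factorial]
  | n + 3, _ => by rw [Pc_add_three_one]; push_cast; ring

theorem Palpha2_one : ∀ {a : ℕ}, 1 ≤ a → Palpha2 a 1 = -(a : ℚ) / 2
  | 1, _ => by norm_num [Palpha2, Nat.factorial]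
  | n + 2, _ => by rw [Palpha2_add_two_one]; push_cast; ring

/-- For `d = 1` and any `a ≥ 1`: `P_c(a,1) = -(a+2)`, `P_{α,2}(a,1) = -a/2`, and
consequently `a·P_c(a,1) - (4·1+2a)·P_{α,2}(a,1) = 0`. -/
theorem d_one_vanishing (a : ℕ) (ha : 1 ≤ a) :
    Pc a 1 = -((a : ℚ) + 2) ∧ Palpha2 a 1 = -(a : ℚ)/2 ∧
      (a : ℚ) * Pc a 1 - (4*1 + 2*(a:ℚ)) * Palpha2 a 1 = 0 := by
  refine ⟨Pc_one ha, Palpha2_one ha, ?_⟩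
  rw [Pc_one ha, Palpha2_one ha]
  ring
end

section
/- For integers g, m, d with g >= 2d and 2g-2-m+d >= 0, the identity 4^d * binom((g-1)/2, d) * ((g/2 + 1 - d)_d / (2g-1-m)_d) = g! * (2g-2-m)! / ((g-2d)! * d! * (2g-2-m+d)!) holds, where binom((g-1)/2, d) is the generalized binomial coefficient and (u)_d is the rising Pochhammer symbol. -/
/-- The rising Pochhammer symbol `(u)_k = u(u+1)⋯(u+k-1)`. -/
def poch (u : ℚ) (k : ℕ) : ℚ := ∏ j ∈ Finset.range k, (u + j)

open Finset Nat

lemma prod_range_natCast_sub_eq_descFactorial {R : Type*} [CommRing R] (n k : ℕ) :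
    ∏ j ∈ range k, ((n : R) - j) = n.descFactorial k := by
  rw [← descPochhammer_eval_eq_descFactorial, descPochhammer_eval_eq_prod_range]

lemma poch_natCast_add_one (e d : ℕ) : poch ((e : ℚ) + 1) d = (e + 1).ascFactorial d := by
  simp only [poch, ascFactorial_eq_prod_range, cast_prod, cast_add, cast_one]

lemma poch_add_one_sub (y : ℚ) (d : ℕ) : poch (y + 1 - d) d = ∏ j ∈ range d, (y - j) := by
  rw [poch, ← prod_range_reflect]
  refine prod_congr rfl fun j hj => ?_
  rw [cast_sub (by simp at hj; omega), cast_sub (by simp at hj; omega)]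
  push_cast
  ring

lemma genChoose_mul_factorial (x : ℚ) (d : ℕ) :
    genChoose x d * d ! = ∏ j ∈ range d, (x - j) :=
  div_mul_cancel₀ _ (cast_ne_zero.mpr (factorial_ne_zero d))

lemma four_pow_mul_prod_half_sub_mul_prod_half_sub (x : ℚ) (d : ℕ) :
    4 ^ d * (∏ j ∈ range d, ((x - 1) / 2 - j)) * ∏ j ∈ range d, (x / 2 - j)
      = ∏ j ∈ range (2 * d), (x - j) := by
  induction d with
  | zero => simp
  | succ d ih =>
    rw [mul_add_one, prod_range_succ, prod_range_succ, prod_range_succ, prod_range_succ, ← ih]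
    push_cast
    ring

lemma four_pow_mul_genChoose_mul_poch (x : ℚ) (d : ℕ) :
    4 ^ d * genChoose ((x - 1) / 2) d * poch (x / 2 + 1 - d) d
      = (∏ j ∈ range (2 * d), (x - j)) / d ! := by
  rw [eq_div_iff (cast_ne_zero.mpr (factorial_ne_zero d)), poch_add_one_sub,
    ← four_pow_mul_prod_half_sub_mul_prod_half_sub, ← genChoose_mul_factorial ((x - 1) / 2)]
  ring

lemma pochhammer_factorial_identity_nat (n e d : ℕ) (h : 2 * d ≤ n) :
    4 ^ d * genChoose (((n : ℚ) - 1) / 2) d * (poch ((n : ℚ) / 2 + 1 - d) d / poch ((e : ℚ) + 1) d)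
      = n ! * e ! / ((n - 2 * d)! * d ! * (e + d)!) := by
  have hn : ((n - 2 * d)! * n.descFactorial (2 * d) : ℚ) = n ! := by
    exact_mod_cast factorial_mul_descFactorial h
  have he : (e ! * (e + 1).ascFactorial d : ℚ) = (e + d)! := by
    exact_mod_cast factorial_mul_ascFactorial e d
  rw [← mul_div_assoc, four_pow_mul_genChoose_mul_poch, prod_range_natCast_sub_eq_descFactorial,
    poch_natCast_add_one, ← hn, ← he]
  have hpos := (e + 1).ascFactorial_pos d
  field_simp

lemma nonneg_of_add_nonneg_of_forall_add_one_add_ne_zero (c : ℤ) (d : ℕ) (hle : 0 ≤ c + d)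
    (hnz : ∀ k : ℕ, k < d → c + 1 + k ≠ 0) : 0 ≤ c := by
  by_contra! hc
  exact hnz (-(c + 1)).toNat (by omega) (by omega)

/-- For integers `g, m, d` with `g ≥ 2d`, `2g-2-m+d ≥ 0`, and `2g-1-m+k ≠ 0` for
`0 ≤ k ≤ d-1`, the identity
`4^d · binom((g-1)/2, d) · ((g/2+1-d)_d / (2g-1-m)_d)`
`= g!(2g-2-m)! / ((g-2d)! d! (2g-2-m+d)!)` holds. -/
theorem pochhammer_factorial_identity (g m : ℤ) (d : ℕ)
    (hg : 2*(d : ℤ) ≤ g) (hm : 0 ≤ 2*g - 2 - m + d)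
    (hnz : ∀ k : ℕ, k < d → (2*(g:ℚ) - 1 - (m:ℚ) + k) ≠ 0) :
    (4:ℚ)^d * genChoose (((g:ℚ) - 1)/2) d
        * (poch ((g:ℚ)/2 + 1 - d) d / poch (2*(g:ℚ) - 1 - (m:ℚ)) d)
      = (Nat.factorial g.toNat : ℚ) * (Nat.factorial (2*g - 2 - m).toNat : ℚ)
          / ((Nat.factorial (g - 2*d).toNat : ℚ) * (Nat.factorial d : ℚ)
              * (Nat.factorial (2*g - 2 - m + d).toNat : ℚ)) := by
  have hnonneg : 0 ≤ 2 * g - 2 - m :=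
    nonneg_of_add_nonneg_of_forall_add_one_add_ne_zero _ d hm fun k hk h =>
      hnz k hk (by exact_mod_cast (by linarith : 2 * g - 1 - m + k = 0))
  obtain ⟨n, rfl⟩ := Int.eq_ofNat_of_zero_le (by omega : 0 ≤ g)
  obtain ⟨e, he⟩ := Int.eq_ofNat_of_zero_le hnonneg
  have hpoch : 2 * (n : ℚ) - 1 - m = e + 1 := by
    have : ((2 * n - 2 - m : ℤ) : ℚ) = e := by exact_mod_cast he
    push_cast at this
    linarith
  rw [Int.cast_natCast, hpoch, Int.toNat_natCast, he, Int.toNat_natCast,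
    show ((n : ℤ) - 2 * d).toNat = n - 2 * d by omega,
    show ((e : ℤ) + d).toNat = e + d by omega]
  exact pochhammer_factorial_identity_nat n e d (by omega)
end

section
/- Let phi(i_1,...,i_{d-1}) be the number of permutations of the multiset {i_1,...,i_{d-1}} (of nonnegative integers summing to d-1) satisfying the ballot constraint that every initial segment of the permuted sequence (j_1,...,j_{d-1}) has j_1+...+j_t <= t for all t. If the nonzero entries among (i_1,...,i_{d-1}) form the partition (lambda_1^{e_1},...,lambda_l^{e_l}) of d-1 with k = e_1+...+e_l parts, then phi = (d-1)!/((d-k)! * e_1! * ... * e_l!). -/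
/-!
Prepend a `0` to `L`. The ballot rearrangements `j` of `L` correspond, via `j ↦ 0 :: j`, to the
rearrangements `x` of `0 :: L` (a list of length `d` and sum `d - 1`) in which every nonempty
prefix of length `s` has sum `< s`. By the cycle lemma, exactly one of the `d` rotations of a
list of length `d` and sum `d - 1` has this property, so these rearrangements are exactly a
`1/d` fraction of all `d! / ((d - k)! e₁! ⋯ e_l!)` rearrangements of `0 :: L`.
-/

open Finset

theorem exists_last_argmin {β : Type*} [LinearOrder β] (p : ℕ → β) {d : ℕ} (hd : 0 < d) :
    ∃ r < d, ∀ t < d, p r ≤ p t ∧ (r < t → p r < p t) := by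
  obtain ⟨r₀, hr₀, hmin⟩ := (range d).exists_min_image p ⟨0, mem_range.2 hd⟩
  obtain ⟨r, hr, hlast⟩ := ((range d).filter (p · = p r₀)).exists_max_image id
    ⟨r₀, mem_filter.2 ⟨hr₀, rfl⟩⟩
  simp only [mem_filter, mem_range, id] at hr hlast hmin
  refine ⟨r, hr.1, fun t ht => ⟨hr.2 ▸ hmin t ht, fun hrt => ?_⟩⟩
  by_contra! hle
  exact (hlast t ⟨ht, le_antisymm (hr.2 ▸ hle) (hmin t ht)⟩).not_gt hrt

namespace List

section Arrangements

variable {α : Type*} [DecidableEq α]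

theorem permutations_toFinset_eq_biUnion {L : List α} (hL : L ≠ []) :
    L.permutations.toFinset =
      L.toFinset.biUnion fun a => (L.erase a).permutations.toFinset.image (a :: ·) := by
  ext x
  simp only [mem_toFinset, mem_permutations, mem_biUnion, mem_image]
  constructor
  · intro hx
    cases x with
    | nil => exact absurd (nil_perm.1 hx) hL
    | cons a y =>
      obtain ⟨ha, hy⟩ := cons_perm_iff_perm_erase.1 hx
      exact ⟨a, ha, y, hy, rfl⟩
  · rintro ⟨a, ha, y, hy, rfl⟩
    exact cons_perm_iff_perm_erase.2 ⟨ha, hy⟩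

theorem card_permutations_toFinset_eq_sum {L : List α} (hL : L ≠ []) :
    L.permutations.toFinset.card =
      ∑ a ∈ L.toFinset, (L.erase a).permutations.toFinset.card := by
  rw [permutations_toFinset_eq_biUnion hL, card_biUnion]
  · exact sum_congr rfl fun a _ => card_image_of_injective _ cons_injective
  · intro a _ b _ hab
    simp only [Function.onFun, Finset.disjoint_left, Finset.mem_image]
    rintro _ ⟨x, _, rfl⟩ ⟨y, _, hyx⟩
    exact hab (head_eq_of_cons_eq hyx).symm

theorem prod_factorial_count_eq_count_mul {L : List α} {s : Finset α} {a : α} (ha : a ∈ L)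
    (has : a ∈ s) :
    ∏ b ∈ s, (L.count b).factorial =
      L.count a * ∏ b ∈ s, ((L.erase a).count b).factorial := by
  rw [← mul_prod_erase s _ has, ← mul_prod_erase s _ has, count_erase_self, ← mul_assoc,
    Nat.mul_factorial_pred (count_pos_iff.2 ha).ne']
  congr 1
  exact prod_congr rfl fun b hb => by rw [count_erase_of_ne (ne_of_mem_erase hb)]

theorem card_permutations_toFinset_mul_prod_factorial_count (L : List α) {s : Finset α}
    (hs : ∀ a ∈ L, a ∈ s) :
    L.permutations.toFinset.card * ∏ a ∈ s, (L.count a).factorial = L.length.factorial := by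
  rcases eq_or_ne L [] with rfl | hL
  · simp
  have herase (a : α) (ha : a ∈ L) : ((L.erase a).permutations.toFinset.card) *
      ∏ b ∈ s, ((L.erase a).count b).factorial = (L.length - 1).factorial := by
    rw [card_permutations_toFinset_mul_prod_factorial_count (L.erase a)
      fun b hb => hs b (erase_subset hb), length_erase_of_mem ha]
  calc L.permutations.toFinset.card * ∏ a ∈ s, (L.count a).factorial
      = ∑ a ∈ L.toFinset, L.count a * (L.length - 1).factorial := by
        rw [card_permutations_toFinset_eq_sum hL, sum_mul]
        refine sum_congr rfl fun a ha => ?_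
        rw [mem_toFinset] at ha
        rw [prod_factorial_count_eq_count_mul ha (hs a ha), mul_left_comm, herase a ha]
    _ = L.length.factorial := by
        rw [← sum_mul, sum_toFinset_count_eq_length,
          Nat.mul_factorial_pred (length_pos_iff.2 hL).ne']
termination_by L.length
decreasing_by exact length_erase_of_mem ha ▸ Nat.sub_lt (length_pos_iff.2 hL) one_pos

end Arrangements

/-- The last term accounts for the wrap-around; it vanishes when `r + s ≤ m.length`. -/
theorem sum_take_rotate_add_sum_take {M : Type*} [AddCommMonoid M] (m : List M) {r s : ℕ}
    (hr : r ≤ m.length) (hs : s ≤ m.length) :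
    ((m.rotate r).take s).sum + (m.take r).sum =
      (m.take (r + s)).sum + (m.take (r + s - m.length)).sum := by
  have hprefix : (m.take (r + s)).take r = m.take r := by rw [take_take]; congr 1; omega
  have hwrap : (m.take r).take (s - (m.length - r)) = m.take (r + s - m.length) := by
    rw [take_take]; congr 1; omega
  rw [rotate_eq_drop_append_take hr, take_append, sum_append, take_drop, length_drop, hwrap,
    ← hprefix, ← sum_take_add_sum_drop (m.take (r + s)) r]
  abel

def IsBallot (j : List ℕ) : Prop := ∀ t, (j.take t).sum ≤ t

def IsStrictBallot (x : List ℕ) : Prop := ∀ s, 0 < s → (x.take s).sum < s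

/-- Split `x` at `r`: both pieces would have sum smaller than their length, but together they are
short by only one. -/
theorem IsStrictBallot.eq_zero_of_rotate {x : List ℕ} (hx : x.IsStrictBallot)
    (hsum : x.sum + 1 = x.length) {r : ℕ} (hr : r < x.length)
    (hxr : (x.rotate r).IsStrictBallot) :
    r = 0 := by
  by_contra hr0
  have hdrop := hxr (x.length - r) (by omega)
  rw [rotate_eq_drop_append_take hr.le, take_left' (by simp)] at hdrop
  have htake := hx r (Nat.pos_of_ne_zero hr0)
  have := sum_take_add_sum_drop x r
  omega

theorem IsStrictBallot.eq_of_rotate_eq_rotate {x y : List ℕ} (hx : x.IsStrictBallot)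
    (hy : y.IsStrictBallot) (hsum : x.sum + 1 = x.length) {r r' : ℕ} (hr : r < x.length)
    (hle : r' ≤ r) (h : x.rotate r = y.rotate r') :
    r = r' ∧ x = y := by
  rw [← Nat.sub_add_cancel hle, ← rotate_rotate, rotate_eq_rotate] at h
  obtain rfl : r = r' := by
    have := hx.eq_zero_of_rotate hsum (by omega) (h ▸ hy)
    omega
  simpa using h

/-- Rotate at the last position `r` where `r - (m.take r).sum` is minimal. -/
theorem exists_isStrictBallot_rotate {m : List ℕ} (hsum : m.sum + 1 = m.length) :
    ∃ r < m.length, (m.rotate r).IsStrictBallot := by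
  obtain ⟨r, hrd, hr⟩ :=
    exists_last_argmin (fun t => (t : ℤ) - (m.take t).sum) (by omega : 0 < m.length)
  refine ⟨r, hrd, fun s hs => ?_⟩
  rcases lt_or_ge m.length s with hds | hsd
  · rw [take_of_length_le (by rw [length_rotate]; omega), (rotate_perm m r).sum_eq]
    omega
  have hsplit := sum_take_rotate_add_sum_take m hrd.le hsd
  rcases le_or_gt (r + s) m.length with hrs | hrs
  · rw [show r + s - m.length = 0 by omega, take_zero, sum_nil, add_zero] at hsplit
    have hlt : (r : ℤ) - (m.take r).sum < ((r + s : ℕ) : ℤ) - (m.take (r + s)).sum := by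
      rcases hrs.lt_or_eq with h | h
      · exact (hr (r + s) h).2 (by omega)
      · have := (hr 0 (by omega)).1
        simp only [h, take_length, take_zero, sum_nil] at this ⊢
        omega
    omega
  · rw [take_of_length_le (show m.length ≤ r + s by omega)] at hsplit
    have := (hr (r + s - m.length) (by omega)).1
    omega

open scoped Classical in
theorem card_permutations_toFinset_eq_length_mul {m : List ℕ} (hsum : m.sum + 1 = m.length) :
    m.permutations.toFinset.card =
      m.length * (m.permutations.toFinset.filter IsStrictBallot).card := by
  have hlen {x : List ℕ} (hx : x ~ m) : x.length = m.length := hx.length_eq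
  have hsum' {x : List ℕ} (hx : x ~ m) : x.sum + 1 = x.length := by rw [hx.sum_eq, hlen hx, hsum]
  rw [← card_range m.length, ← card_product]
  symm
  apply card_nbij fun p => p.2.rotate p.1
  · rintro ⟨r, x⟩ hx
    simp only [Finset.mem_coe, Finset.mem_product, Finset.mem_range, Finset.mem_filter,
      mem_toFinset, mem_permutations] at hx ⊢
    exact (rotate_perm x r).trans hx.2.1
  · rintro ⟨r, x⟩ hx ⟨r', y⟩ hy hxy
    simp only [Finset.mem_coe, Finset.mem_product, Finset.mem_range, Finset.mem_filter,
      mem_toFinset, mem_permutations] at hx hy hxy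
    rcases le_total r' r with hle | hle
    · obtain ⟨rfl, rfl⟩ := hx.2.2.eq_of_rotate_eq_rotate hy.2.2 (hsum' hx.2.1)
        (hlen hx.2.1 ▸ hx.1) hle hxy
      rfl
    · obtain ⟨rfl, rfl⟩ := hy.2.2.eq_of_rotate_eq_rotate hx.2.2 (hsum' hy.2.1)
        (hlen hy.2.1 ▸ hy.1) hle hxy.symm
      rfl
  · intro x hx
    simp only [Finset.mem_coe, mem_toFinset, mem_permutations] at hx
    obtain ⟨r, hr, hgood⟩ := exists_isStrictBallot_rotate (hsum' hx)
    refine ⟨((m.length - r) % m.length, x.rotate r), ?_, ?_⟩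
    · simp only [Finset.mem_coe, Finset.mem_product, Finset.mem_range, Finset.mem_filter,
        mem_toFinset, mem_permutations]
      exact ⟨Nat.mod_lt _ (by omega), (rotate_perm x r).trans hx, hgood⟩
    · dsimp only
      rw [← hlen hx, ← length_rotate (n := r), rotate_mod, rotate_rotate, length_rotate,
        Nat.add_sub_cancel' hr.le, rotate_length]

theorem IsStrictBallot.head_eq_zero {a : ℕ} {j : List ℕ} (h : (a :: j).IsStrictBallot) :
    a = 0 := by
  simpa using h 1 one_pos

theorem isStrictBallot_cons_zero_iff {j : List ℕ} : (0 :: j).IsStrictBallot ↔ j.IsBallot := by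
  refine ⟨fun h t => ?_, fun h s hs => ?_⟩
  · simpa [Nat.lt_succ_iff] using h (t + 1) t.succ_pos
  · obtain ⟨t, rfl⟩ := Nat.exists_eq_add_one_of_ne_zero hs.ne'
    simpa [Nat.lt_succ_iff] using h t

open scoped Classical in
theorem filter_isStrictBallot_permutations_cons_zero (L : List ℕ) :
    (0 :: L).permutations.toFinset.filter IsStrictBallot =
      (L.permutations.toFinset.filter IsBallot).image (0 :: ·) := by
  ext x
  simp only [Finset.mem_filter, Finset.mem_image, mem_toFinset, mem_permutations]
  constructor
  · rintro ⟨hx, hb⟩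
    cases x with
    | nil => exact absurd (nil_perm.1 hx) (cons_ne_nil 0 L)
    | cons a j =>
      obtain rfl := hb.head_eq_zero
      exact ⟨j, ⟨(perm_cons 0).1 hx, isStrictBallot_cons_zero_iff.1 hb⟩, rfl⟩
  · rintro ⟨j, ⟨hj, hb⟩, rfl⟩
    exact ⟨hj.cons 0, isStrictBallot_cons_zero_iff.2 hb⟩

theorem isBallot_iff_forall_mem_range {j : List ℕ} {n : ℕ} (h : j.sum < n) :
    j.IsBallot ↔ ∀ t ∈ Finset.range n, (j.take t).sum ≤ t := by
  refine ⟨fun hj t _ => hj t, fun hj t => ?_⟩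
  rcases lt_or_ge t n with ht | ht
  · exact hj t (Finset.mem_range.2 ht)
  · have := sum_take_add_sum_drop j t
    omega

end List

namespace Multiset

variable {ι α : Type*} [Fintype ι] [DecidableEq α] {f : ι → α}

theorem count_sum_replicate_apply (hf : Function.Injective f) (e : ι → ℕ) (i : ι) :
    (∑ j, replicate (e j) (f j)).count (f i) = e i := by
  rw [count_sum', Finset.sum_eq_single i
    (fun j _ hji => by rw [count_replicate, if_neg (hf.ne hji)]) (by simp), count_replicate_self]

theorem count_sum_replicate_of_forall_ne (e : ι → ℕ) {a : α} (ha : ∀ j, f j ≠ a) :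
    (∑ j, replicate (e j) (f j)).count a = 0 := by
  simp [count_sum', count_replicate, ha]

theorem mem_insert_image_of_mem_sum_replicate_add_replicate {e : ι → ℕ} {n : ℕ} {a b : α}
    (hb : b ∈ ∑ i, replicate (e i) (f i) + replicate n a) :
    b ∈ insert a (Finset.univ.image f) := by
  rcases mem_add.1 hb with hb | hb
  · obtain ⟨i, -, hi⟩ := mem_sum.1 hb
    simp [eq_of_mem_replicate hi]
  · simp [eq_of_mem_replicate hb]

theorem prod_factorial_count_sum_replicate_add_replicate (hf : Function.Injective f) {a : α}
    (ha : ∀ i, f i ≠ a) (e : ι → ℕ) (n : ℕ) :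
    ∏ b ∈ insert a (Finset.univ.image f),
        ((∑ i, replicate (e i) (f i) + replicate n a).count b).factorial
      = n.factorial * ∏ i, (e i).factorial := by
  have ha' : a ∉ Finset.univ.image f := by simpa using ha
  simp only [count_add]
  rw [Finset.prod_insert ha', Finset.prod_image hf.injOn, count_sum_replicate_of_forall_ne e ha,
    count_replicate_self, zero_add]
  congr 1
  refine Finset.prod_congr rfl fun i _ => ?_
  rw [count_sum_replicate_apply hf, count_replicate, if_neg (ha i).symm, add_zero]

end Multiset

theorem count_ballot_rearrangements_general (d : ℕ) (hd : 2 ≤ d)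
    (L : List ℕ) (hlen : L.length = d - 1) (hsum : L.sum = d - 1)
    (l : ℕ) (lam e : Fin l → ℕ)
    (hlam_pos : ∀ i, 0 < lam i)
    (hlam_anti : ∀ i j : Fin l, i < j → lam j < lam i)
    (k : ℕ) (hkd : k ≤ d - 1)
    (hL : (L : Multiset ℕ)
        = (∑ i, Multiset.replicate (e i) (lam i)) + Multiset.replicate (d - 1 - k) 0) :
    ((L.permutations.toFinset.filter
        (fun j : List ℕ => ∀ t ∈ Finset.range d, (j.take t).sum ≤ t)).card : ℚ)
      = (Nat.factorial (d - 1) : ℚ)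
          / ((Nat.factorial (d - k) : ℚ) * ∏ i, (Nat.factorial (e i) : ℚ)) := by
  classical
  have hB : L.permutations.toFinset.filter
      (fun j : List ℕ => ∀ t ∈ Finset.range d, (j.take t).sum ≤ t)
        = L.permutations.toFinset.filter List.IsBallot :=
    Finset.filter_congr fun j hj => (List.isBallot_iff_forall_mem_range (n := d) (by
      rw [(List.mem_permutations.1 (List.mem_toFinset.1 hj)).sum_eq]; omega)).symm
  have hL0 : ((0 :: L : List ℕ) : Multiset ℕ)
      = (∑ i, Multiset.replicate (e i) (lam i)) + Multiset.replicate (d - k) 0 := by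
    rw [← Multiset.cons_coe, hL, show d - k = d - 1 - k + 1 by omega, Multiset.replicate_succ,
      Multiset.add_cons]
  have hcycle := List.card_permutations_toFinset_eq_length_mul (m := 0 :: L) (by
    simp only [List.sum_cons, List.length_cons]; omega)
  rw [List.filter_isStrictBallot_permutations_cons_zero,
    Finset.card_image_of_injective _ List.cons_injective] at hcycle
  have hmultinomial := List.card_permutations_toFinset_mul_prod_factorial_count (0 :: L)
    fun a ha => Multiset.mem_insert_image_of_mem_sum_replicate_add_replicate
      (hL0 ▸ Multiset.mem_coe.2 ha)
  simp only [← Multiset.coe_count, hL0] at hmultinomial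
  rw [Multiset.prod_factorial_count_sum_replicate_add_replicate (StrictAnti.injective hlam_anti)
      fun i => (hlam_pos i).ne', hcycle, List.length_cons, hlen,
    Nat.sub_add_cancel (by omega : 1 ≤ d), ← Nat.mul_factorial_pred (by omega : d ≠ 0),
    mul_assoc] at hmultinomial
  rw [hB, eq_div_iff (by positivity)]
  exact_mod_cast Nat.eq_of_mul_eq_mul_left (by omega) hmultinomial

/-- Let `d ≥ 2` and let `L` be a sequence of `d-1` nonnegative integers summing to
`d-1`, whose nonzero entries form the partition `(λ₁^{e₁}, …, λ_l^{e_l})` of `d-1`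
(distinct values `λ₁ > ⋯ > λ_l > 0` with multiplicities `e₁, …, e_l`, and
`k = e₁ + ⋯ + e_l` parts).  Then the number `φ` of distinct rearrangements
`(j₁, …, j_{d-1})` of `L` satisfying the ballot constraint
`j₁ + ⋯ + j_t ≤ t` for all `t` equals `(d-1)!/((d-k)!·e₁!⋯e_l!)`. -/
theorem count_ballot_rearrangements (d : ℕ) (hd : 2 ≤ d)
    (L : List ℕ) (hlen : L.length = d - 1) (hsum : L.sum = d - 1)
    (l : ℕ) (lam e : Fin l → ℕ)
    (hlam_pos : ∀ i, 0 < lam i) (he_pos : ∀ i, 0 < e i)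
    (hlam_anti : ∀ i j : Fin l, i < j → lam j < lam i)
    (k : ℕ) (hk : k = ∑ i, e i) (hkd : k ≤ d - 1)
    (hL : (L : Multiset ℕ)
        = (∑ i, Multiset.replicate (e i) (lam i)) + Multiset.replicate (d - 1 - k) 0) :
    ((L.permutations.toFinset.filter
        (fun j : List ℕ => ∀ t ∈ Finset.range d, (j.take t).sum ≤ t)).card : ℚ)
      = (Nat.factorial (d - 1) : ℚ)
          / ((Nat.factorial (d - k) : ℚ) * ∏ i, (Nat.factorial (e i) : ℚ)) :=
  count_ballot_rearrangements_general d hd L hlen hsum l lam e hlam_pos hlam_anti k hkd hL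
end
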